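/- The operator H := H_1 + ε_1H_2 + … + ε_1ε_2⋯ε_{n−1}H_n satisfies H² = 0 and ∂H + H∂ = 1 − ε_1⋯ε_n. -/

import Mathlib

/-!
STATEMENT 10: The operator `H := H₁ + ε₁H₂ + … + ε₁ε₂⋯ε_{n−1}H_n` satisfies
`H² = 0` and `∂H + H∂ = 1 − ε₁⋯ε_n`.
-/

open scoped Classical

abbrev Fam (n : ℕ) (A : Type*) := (Fin n → SignType) → A

noncomputable def zcount {n : ℕ} (s : Fin n → SignType) (i : Fin n) : ℕ :=
  (Finset.univ.filter fun j => i < j ∧ s j = 0).card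

noncomputable def bd {n : ℕ} {A : Type*} [Ring A] (i : Fin n) (f : Fam n A) : Fam n A :=
  fun s => if s i = 0 then 0
    else ((-1 : ℤ) ^ zcount s i) • f (Function.update s i 0)

/-- The total differential `∂ = ∑ ∂_i`. -/
noncomputable def bigD {n : ℕ} {A : Type*} [Ring A] (f : Fam n A) : Fam n A :=
  fun s => ∑ i : Fin n, bd i f s

noncomputable def Psgn {n : ℕ} {A : Type*} [Ring A] (P : Fin n → A) (i : Fin n) :
    SignType → A
  | SignType.pos => P i
  | SignType.neg => 1 - P i
  | SignType.zero => 0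

noncomputable def eps {n : ℕ} {A : Type*} [Ring A] (P : Fin n → A) (i : Fin n)
    (f : Fam n A) : Fam n A :=
  fun s => if s i = 0 then 0
    else ((s i : ℤ)) • (Psgn P i (s i) *
      ((1 : ℤ) • f (Function.update s i 1) + (-1 : ℤ) • f (Function.update s i (-1))))

noncomputable def hmt {n : ℕ} {A : Type*} [Ring A] (P : Fin n → A) (i : Fin n)
    (f : Fam n A) : Fam n A :=
  fun s => if s i = 0 then
      ((-1 : ℤ) ^ zcount s i) •
        ((1 - P i) * f (Function.update s i 1) + P i * f (Function.update s i (-1)))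
    else 0

/-- `ε₁ε₂⋯ε_m` (the composite of the first `m` operators `ε`). -/
noncomputable def epsUpTo {n : ℕ} {A : Type*} [Ring A] (P : Fin n → A) :
    ℕ → Fam n A → Fam n A
  | 0 => id
  | (m+1) => fun f => if h : m < n then epsUpTo P m (eps P ⟨m, h⟩ f) else epsUpTo P m f

/-- `H := H₁ + ε₁H₂ + … + ε₁⋯ε_{n−1}H_n`. -/
noncomputable def bigH {n : ℕ} {A : Type*} [Ring A] (P : Fin n → A) (f : Fam n A) :
    Fam n A :=
  fun s => ∑ i : Fin n, epsUpTo P (i : ℕ) (hmt P i f) s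

/-!
Only the relations among `∂ᵢ`, `Hᵢ`, `εᵢ` matter, so the argument runs in any ring. Write
`Eᵢ = ε₀⋯εᵢ₋₁`, so that `H = ∑ᵢ EᵢHᵢ`. In `H² = ∑ᵢⱼ EᵢHᵢEⱼHⱼ` the terms with `i < j` vanish
because `Hᵢ` moves past `ε₀, …, εᵢ₋₁` and `Hᵢεᵢ = 0`; the diagonal terms vanish since `Hᵢ² = 0`;
for `j < i`, anticommuting `Hᵢ` and `Hⱼ` exposes `EᵢHⱼ = 0`, a consequence of `εⱼHⱼ = 0`.
In `∂H + H∂ = ∑ᵢₖ (∂ₖEᵢHᵢ + EᵢHᵢ∂ₖ)` the terms with `k < i` vanish because `∂ₖεₖ = εₖ∂ₖ = 0`,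
those with `k > i` because `∂ₖ` and `Hᵢ` anticommute, and the diagonal contributes
`Eᵢ(1 - εᵢ) = Eᵢ - Eᵢ₊₁`, which telescopes to `1 - Eₙ`.
-/

section PrefixProd

variable {R : Type*} [Ring R] {n : ℕ}

def prefixProd (e : Fin n → R) : ℕ → R
  | 0 => 1
  | m + 1 => if h : m < n then prefixProd e m * e ⟨m, h⟩ else prefixProd e m

def cubicalH (e h : Fin n → R) : R := ∑ i : Fin n, prefixProd e i * h i

variable {e : Fin n → R}

theorem prefixProd_succ_of_lt {m : ℕ} (hm : m < n) :
    prefixProd e (m + 1) = prefixProd e m * e ⟨m, hm⟩ :=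
  dif_pos hm

theorem commute_prefixProd {x : R} {m : ℕ} (hx : ∀ k : Fin n, (k : ℕ) < m → Commute x (e k)) :
    Commute x (prefixProd e m) := by
  induction m with
  | zero => exact Commute.one_right x
  | succ m ih =>
    rw [prefixProd]
    split_ifs with hm
    · exact (ih fun k hk => hx k (by omega)).mul_right (hx _ (by simp))
    · exact ih fun k hk => hx k (by omega)

theorem mul_prefixProd_eq_zero {x : R} {k : Fin n} (hx : ∀ j : Fin n, j < k → Commute x (e j))
    (hxk : x * e k = 0) {m : ℕ} (hkm : (k : ℕ) < m) : x * prefixProd e m = 0 := by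
  induction m with
  | zero => omega
  | succ m ih =>
    rw [prefixProd]
    split_ifs with hm
    · rcases (Nat.lt_succ_iff.1 hkm).lt_or_eq with hlt | rfl
      · rw [← mul_assoc, ih hlt, zero_mul]
      · rw [← mul_assoc, (commute_prefixProd hx).eq, mul_assoc, hxk, mul_zero]
    · exact ih (by omega)

theorem prefixProd_mul_eq_zero {x : R} {k : Fin n} (hx : ∀ j : Fin n, k < j → Commute x (e j))
    (hkx : e k * x = 0) {m : ℕ} (hkm : (k : ℕ) < m) : prefixProd e m * x = 0 := by
  induction m with
  | zero => omega
  | succ m ih =>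
    rw [prefixProd]
    split_ifs with hm
    · rcases (Nat.lt_succ_iff.1 hkm).lt_or_eq with hlt | rfl
      · rw [mul_assoc, ← (hx _ (Fin.lt_def.2 hlt)).eq, ← mul_assoc, ih hlt, zero_mul]
      · rw [mul_assoc, hkx, mul_zero]
    · exact ih (by omega)

theorem sum_prefixProd_mul_one_sub :
    ∑ i : Fin n, prefixProd e i * (1 - e i) = 1 - prefixProd e n := by
  calc ∑ i : Fin n, prefixProd e i * (1 - e i)
      = ∑ i : Fin n, (prefixProd e i - prefixProd e (i + 1)) := by
        refine Finset.sum_congr rfl fun i _ => ?_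
        rw [prefixProd_succ_of_lt i.isLt, mul_one_sub]
    _ = 1 - prefixProd e n := by
        rw [Fin.sum_univ_eq_sum_range (fun m => prefixProd e m - prefixProd e (m + 1)),
          Finset.sum_range_sub']
        rfl

end PrefixProd

structure IsCubicalHomotopy {R : Type*} [Ring R] {n : ℕ} (d h e : Fin n → R) : Prop where
  h_mul_self : ∀ i, h i * h i = 0
  h_anticomm : ∀ i j, i ≠ j → h i * h j = -(h j * h i)
  commute_h_e : ∀ i j, i ≠ j → Commute (h i) (e j)
  commute_d_e : ∀ i j, i ≠ j → Commute (d i) (e j)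
  d_h_anticomm : ∀ i j, i ≠ j → d i * h j = -(h j * d i)
  d_h_add_h_d : ∀ i, d i * h i + h i * d i = 1 - e i
  e_mul_h : ∀ i, e i * h i = 0
  h_mul_e : ∀ i, h i * e i = 0
  d_mul_e : ∀ i, d i * e i = 0
  e_mul_d : ∀ i, e i * d i = 0

namespace IsCubicalHomotopy

variable {R : Type*} [Ring R] {n : ℕ} {d h e : Fin n → R}

theorem cubicalH_mul_self (hc : IsCubicalHomotopy d h e) : cubicalH e h * cubicalH e h = 0 := by
  rw [cubicalH, Finset.sum_mul_sum]
  refine Finset.sum_eq_zero fun i _ => Finset.sum_eq_zero fun j _ => ?_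
  rcases lt_trichotomy i j with hij | rfl | hji
  · have : h i * prefixProd e j = 0 :=
      mul_prefixProd_eq_zero (fun k hk => hc.commute_h_e i k hk.ne') (hc.h_mul_e i) hij
    rw [mul_assoc, ← mul_assoc (h i), this, zero_mul, mul_zero]
  · have : Commute (h i) (prefixProd e i) :=
      commute_prefixProd fun k hk => hc.commute_h_e i k (Fin.ne_of_gt hk)
    rw [mul_assoc, ← mul_assoc (h i), this.eq, mul_assoc, hc.h_mul_self, mul_zero, mul_zero]
  · have hi_comm : Commute (h i) (prefixProd e j) :=
      commute_prefixProd fun k hk => hc.commute_h_e i k (by omega)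
    have hj_comm : Commute (h j) (prefixProd e j) :=
      commute_prefixProd fun k hk => hc.commute_h_e j k (Fin.ne_of_gt hk)
    have hvanish : prefixProd e i * h j = 0 :=
      prefixProd_mul_eq_zero (fun k hk => hc.commute_h_e j k hk.ne) (hc.e_mul_h j) hji
    calc prefixProd e i * h i * (prefixProd e j * h j)
        = prefixProd e i * prefixProd e j * (h i * h j) := by
          rw [mul_assoc, ← mul_assoc (h i), hi_comm.eq]
          noncomm_ring
      _ = -(prefixProd e i * h j * prefixProd e j * h i) := by
          rw [hc.h_anticomm i j hji.ne', mul_assoc _ (h j), hj_comm.eq]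
          noncomm_ring
      _ = 0 := by rw [hvanish]; noncomm_ring

theorem d_mul_add_mul_d (hc : IsCubicalHomotopy d h e) (i k : Fin n) :
    d k * (prefixProd e i * h i) + prefixProd e i * h i * d k =
      if k = i then prefixProd e i * (1 - e i) else 0 := by
  rcases lt_or_ge k i with hki | hik
  · have hleft : d k * prefixProd e i = 0 :=
      mul_prefixProd_eq_zero (fun j hj => hc.commute_d_e k j hj.ne') (hc.d_mul_e k) hki
    have hright : prefixProd e i * d k = 0 :=
      prefixProd_mul_eq_zero (fun j hj => hc.commute_d_e k j hj.ne) (hc.e_mul_d k) hki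
    have hanti : h i * d k = -(d k * h i) := by rw [hc.d_h_anticomm k i hki.ne, neg_neg]
    rw [if_neg hki.ne, ← mul_assoc, hleft, mul_assoc, hanti, mul_neg, ← mul_assoc, hright]
    simp
  · have : Commute (d k) (prefixProd e i) :=
      commute_prefixProd fun j hj => hc.commute_d_e k j (by omega)
    rw [← mul_assoc, this.eq, mul_assoc, mul_assoc, ← mul_add]
    split_ifs with hki
    · rw [hki, hc.d_h_add_h_d]
    · rw [hc.d_h_anticomm k i hki, neg_add_cancel, mul_zero]

theorem sum_d_mul_cubicalH_add_cubicalH_mul_sum_d (hc : IsCubicalHomotopy d h e) :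
    (∑ k, d k) * cubicalH e h + cubicalH e h * ∑ k, d k = 1 - prefixProd e n := by
  calc (∑ k, d k) * cubicalH e h + cubicalH e h * ∑ k, d k
      = ∑ i : Fin n, ∑ k : Fin n,
          (d k * (prefixProd e i * h i) + prefixProd e i * h i * d k) := by
        rw [cubicalH, Finset.sum_mul_sum, Finset.sum_mul_sum, Finset.sum_comm,
          ← Finset.sum_add_distrib]
        simp only [Finset.sum_add_distrib]
    _ = ∑ i : Fin n, prefixProd e i * (1 - e i) := by
        simp only [hc.d_mul_add_mul_d, Finset.sum_ite_eq', Finset.mem_univ, if_true]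
    _ = 1 - prefixProd e n := sum_prefixProd_mul_one_sub

end IsCubicalHomotopy

section CubicalOperators

open Function

variable {n : ℕ} {A : Type*} [Ring A] (P : Fin n → A)

theorem zcount_update (s : Fin n → SignType) (j : Fin n) (c : SignType) (i : Fin n) :
    zcount (update s j c) i + (if i < j ∧ s j = 0 then 1 else 0)
      = zcount s i + (if i < j ∧ c = 0 then 1 else 0) := by
  simp only [zcount, Finset.card_filter]
  rw [← Finset.sum_erase_add _ _ (Finset.mem_univ j),
    ← Finset.sum_erase_add _ _ (Finset.mem_univ j), update_self,
    Finset.sum_congr rfl fun k hk => by rw [update_of_ne (Finset.ne_of_mem_erase hk)]]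
  omega

theorem zcount_update_of_le {i j : Fin n} (hji : j ≤ i) (s : Fin n → SignType) (c : SignType) :
    zcount (update s j c) i = zcount s i := by
  have := zcount_update s j c i
  simp only [hji.not_gt, false_and, if_false] at this
  omega

theorem zcount_update_of_iff {i j : Fin n} {s : Fin n → SignType} {c : SignType}
    (h : s j = 0 ↔ c = 0) : zcount (update s j c) i = zcount s i := by
  have := zcount_update s j c i
  simp only [h] at this
  omega

theorem neg_one_pow_zcount_update_of_lt {i j : Fin n} (hij : i < j) {s : Fin n → SignType}
    {c : SignType} (h : s j = 0 ↔ c ≠ 0) :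
    (-1 : ℤ) ^ zcount (update s j c) i = -(-1) ^ zcount s i := by
  have key := zcount_update s j c i
  by_cases hc : c = 0
  · subst hc
    have hs : s j ≠ 0 := fun hs => h.1 hs rfl
    simp only [hij, hs, true_and, if_true, if_false, add_zero] at key
    rw [key, pow_succ, mul_neg_one]
  · simp only [hij, h.2 hc, hc, true_and, if_true, if_false, add_zero] at key
    rw [← key, pow_succ, mul_neg_one, neg_neg]

theorem bd_add (i : Fin n) (f g : Fam n A) : bd i (f + g) = bd i f + bd i g := by
  funext s
  by_cases hi : s i = 0 <;> simp [bd, hi]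

theorem eps_add (i : Fin n) (f g : Fam n A) : eps P i (f + g) = eps P i f + eps P i g := by
  funext s
  by_cases hi : s i = 0 <;> simp [eps, hi, mul_add]
  abel

theorem hmt_add (i : Fin n) (f g : Fam n A) : hmt P i (f + g) = hmt P i f + hmt P i g := by
  funext s
  by_cases hi : s i = 0 <;> simp [hmt, hi, mul_add]
  abel

noncomputable def bdEnd (i : Fin n) : AddMonoid.End (Fam n A) :=
  AddMonoidHom.mk' (bd i) (bd_add i)

noncomputable def epsEnd (i : Fin n) : AddMonoid.End (Fam n A) :=
  AddMonoidHom.mk' (eps P i) (eps_add P i)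

noncomputable def hmtEnd (i : Fin n) : AddMonoid.End (Fam n A) :=
  AddMonoidHom.mk' (hmt P i) (hmt_add P i)

theorem hmt_hmt_self (i : Fin n) (f : Fam n A) : hmt P i (hmt P i f) = 0 := by
  funext s
  by_cases hi : s i = 0 <;> simp [hmt, hi]

theorem eps_hmt_self (i : Fin n) (f : Fam n A) : eps P i (hmt P i f) = 0 := by
  funext s
  by_cases hi : s i = 0 <;> simp [eps, hmt, hi]

theorem hmt_eps_self (hidem : ∀ i, P i * P i = P i) (i : Fin n) (f : Fam n A) :
    hmt P i (eps P i f) = 0 := by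
  funext s
  by_cases hi : s i = 0 <;>
    simp [eps, hmt, hi, Psgn, -zsmul_eq_mul, mul_add, mul_sub, sub_mul, mul_neg, ← mul_assoc,
      hidem]

theorem bd_eps_self (i : Fin n) (f : Fam n A) : bd i (eps P i f) = 0 := by
  funext s
  by_cases hi : s i = 0 <;> simp [bd, eps, hi]

theorem eps_bd_self (i : Fin n) (f : Fam n A) : eps P i (bd i f) = 0 := by
  funext s
  by_cases hi : s i = 0 <;> simp [bd, eps, hi, zcount_update_of_le le_rfl]

theorem bd_hmt_add_hmt_bd (i : Fin n) (f : Fam n A) :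
    bd i (hmt P i f) + hmt P i (bd i f) = f - eps P i f := by
  funext s
  have hs : update s i (s i) = s := update_eq_self i s
  rcases hi : s i with _ | _ | _ <;>
    simp only [hi, SignType.zero_eq_zero, SignType.neg_eq_neg_one, SignType.pos_eq_one] at hs <;>
    simp [bd, hmt, eps, hi, hs, Psgn, zcount_update_of_le le_rfl, -zsmul_eq_mul, mul_add,
      sub_mul, mul_neg, smul_smul, ← pow_add]
  all_goals abel

theorem bd_eps_comm {k j : Fin n} (hkj : k ≠ j) (f : Fam n A) :
    bd k (eps P j f) = eps P j (bd k f) := by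
  funext s
  by_cases hk : s k = 0 <;> by_cases hj : s j = 0 <;>
    simp [bd, eps, hk, hj, hkj, hkj.symm, update_of_ne, zcount_update_of_iff, update_comm hkj,
      -zsmul_eq_mul, mul_add, mul_neg]
  module

theorem bd_hmt_anticomm {k i : Fin n} (hki : k ≠ i) (f : Fam n A) :
    bd k (hmt P i f) = -hmt P i (bd k f) := by
  funext s
  rcases hki.lt_or_gt with hlt | hlt <;>
  by_cases hk : s k = 0 <;> by_cases hi : s i = 0 <;>
    simp [bd, hmt, hk, hi, hki, hki.symm, update_of_ne, zcount_update_of_le hlt.le,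
      neg_one_pow_zcount_update_of_lt hlt, update_comm hki, -zsmul_eq_mul, mul_neg]
  all_goals module

theorem hmt_eps_comm (hcomm : ∀ i j, P i * P j = P j * P i) {i j : Fin n}
    (hij : i ≠ j) (f : Fam n A) :
    hmt P i (eps P j f) = eps P j (hmt P i f) := by
  have hcomm' : ∀ i j x, P i * (P j * x) = P j * (P i * x) := fun i j => Commute.left_comm (hcomm i j)
  funext s
  by_cases hi : s i = 0 <;> rcases hj : s j with _ | _ | _ <;>
    simp [hmt, eps, hi, hj, Psgn, hij, hij.symm, update_of_ne, zcount_update_of_iff,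
      update_comm hij, -zsmul_eq_mul, mul_add, mul_sub, sub_mul, mul_neg, hcomm']
  all_goals module

theorem hmt_hmt_anticomm (hcomm : ∀ i j, P i * P j = P j * P i) {i j : Fin n}
    (hij : i ≠ j) (f : Fam n A) :
    hmt P i (hmt P j f) = -hmt P j (hmt P i f) := by
  have hcomm' : ∀ i j x, P i * (P j * x) = P j * (P i * x) := fun i j => Commute.left_comm (hcomm i j)
  funext s
  rcases hij.lt_or_gt with hlt | hlt <;>
  by_cases hi : s i = 0 <;> by_cases hj : s j = 0 <;>
    simp [hmt, hi, hj, hij, hij.symm, update_of_ne, zcount_update_of_le hlt.le,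
      neg_one_pow_zcount_update_of_lt hlt, update_comm hij, -zsmul_eq_mul, mul_add, mul_sub,
      sub_mul, mul_neg, hcomm']
  all_goals module

theorem isCubicalHomotopy_bdEnd_hmtEnd_epsEnd (hidem : ∀ i, P i * P i = P i)
    (hcomm : ∀ i j, P i * P j = P j * P i) :
    IsCubicalHomotopy bdEnd (hmtEnd P) (epsEnd P) where
  h_mul_self i := AddMonoidHom.ext (hmt_hmt_self P i)
  h_anticomm _ _ hij := AddMonoidHom.ext (hmt_hmt_anticomm P hcomm hij)
  commute_h_e _ _ hij := AddMonoidHom.ext (hmt_eps_comm P hcomm hij)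
  commute_d_e _ _ hij := AddMonoidHom.ext (bd_eps_comm P hij)
  d_h_anticomm _ _ hij := AddMonoidHom.ext (bd_hmt_anticomm P hij)
  d_h_add_h_d i := AddMonoidHom.ext (bd_hmt_add_hmt_bd P i)
  e_mul_h i := AddMonoidHom.ext (eps_hmt_self P i)
  h_mul_e i := AddMonoidHom.ext (hmt_eps_self P hidem i)
  d_mul_e i := AddMonoidHom.ext (bd_eps_self P i)
  e_mul_d i := AddMonoidHom.ext (eps_bd_self P i)

theorem epsUpTo_eq_prefixProd (m : ℕ) : epsUpTo P m = prefixProd (epsEnd P) m := by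
  induction m with
  | zero => rfl
  | succ m ih =>
    funext f
    by_cases hm : m < n
    · simp only [epsUpTo, prefixProd, hm, ↓reduceDIte, ih]
      rfl
    · simp only [epsUpTo, prefixProd, hm, ↓reduceDIte, ih]

theorem bigH_eq_cubicalH (f : Fam n A) : bigH P f = cubicalH (epsEnd P) (hmtEnd P) f := by
  have : cubicalH (epsEnd P) (hmtEnd P) f = ∑ i : Fin n, epsUpTo P i (hmt P i f) := by
    simp only [epsUpTo_eq_prefixProd]
    exact AddMonoidHom.finsetSum_apply _ _ f
  rw [this]
  funext s
  exact (Finset.sum_apply s _ _).symm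

theorem bigD_eq_sum_bdEnd (f : Fam n A) : bigD f = (∑ i, bdEnd i) f := by
  rw [show (∑ i, bdEnd i) f = ∑ i, bd i f from AddMonoidHom.finsetSum_apply _ _ f]
  funext s
  exact (Finset.sum_apply s _ _).symm

end CubicalOperators

theorem bigH_identities {n : ℕ} {A : Type*} [Ring A] (P : Fin n → A)
    (hidem : ∀ i, P i * P i = P i)
    (hcomm : ∀ i j, P i * P j = P j * P i) :
    (∀ f : Fam n A, bigH P (bigH P f) = 0) ∧
    (∀ f : Fam n A, bigD (bigH P f) + bigH P (bigD f) = f - epsUpTo P n f) := by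
  have hc := isCubicalHomotopy_bdEnd_hmtEnd_epsEnd P hidem hcomm
  refine ⟨fun f => ?_, fun f => ?_⟩
  · simp only [bigH_eq_cubicalH]
    exact congrArg (· f) hc.cubicalH_mul_self
  · simp only [bigH_eq_cubicalH, bigD_eq_sum_bdEnd, epsUpTo_eq_prefixProd]
    exact congrArg (· f) hc.sum_d_mul_cubicalH_add_cubicalH_mul_sum_d
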